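/- For every integer k ≥ 1, the sum of the entries of the vector σ^(k) equals (1/2)(1 - (1+√2)^{1-k}). -/

import Mathlib

/-- β_i = 1 + (1+√2)^{i-1} (real exponent). -/
noncomputable def beta (i : ℕ) : ℝ := 1 + (1 + Real.sqrt 2) ^ ((i : ℝ) - 1)

/-- π^(ℓ) ∈ ℝ^{2^ℓ - 1}, with i-th entry β_{ν(i)} (ν the 2-adic valuation). -/
noncomputable def piList (ℓ : ℕ) : List ℝ :=
  (List.range (2 ^ ℓ - 1)).map fun i => beta (padicValNat 2 (i + 1))

lemma val_add_pow (ℓ m : ℕ) (hm : 0 < m) (hm' : m < 2 ^ ℓ) :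
    padicValNat 2 (2 ^ ℓ + m) = padicValNat 2 m := by
  have : Fact (Nat.Prime 2) := ⟨Nat.prime_two⟩
  set ν := padicValNat 2 m with hν
  have hdvd : 2 ^ ν ∣ m := pow_padicValNat_dvd
  have hle : ν < ℓ := by
    have h1 : 2 ^ ν ≤ m := Nat.le_of_dvd hm hdvd
    exact (Nat.pow_lt_pow_iff_right (by norm_num)).mp (h1.trans_lt hm')
  have hne : 2 ^ ℓ + m ≠ 0 := by positivity
  refine le_antisymm ?_ ?_
  · by_contra h
    push_neg at h
    have h2 : 2 ^ (ν + 1) ∣ 2 ^ ℓ + m := (padicValNat_dvd_iff_le hne).mpr h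
    have h3 : 2 ^ (ν + 1) ∣ 2 ^ ℓ := pow_dvd_pow 2 hle
    have h4 : 2 ^ (ν + 1) ∣ m := (Nat.dvd_add_right h3).mp h2
    have := (padicValNat_dvd_iff_le hm.ne').mp h4
    omega
  · exact (padicValNat_dvd_iff_le hne).mp (dvd_add (pow_dvd_pow 2 hle.le) hdvd)

lemma piList_succ (ℓ : ℕ) :
    piList (ℓ + 1) = piList ℓ ++ [beta ℓ] ++ piList ℓ := by
  have hp : (1:ℕ) ≤ 2 ^ ℓ := Nat.one_le_two_pow
  have h1 : (2:ℕ) ^ (ℓ + 1) - 1 = (2 ^ ℓ - 1) + 1 + (2 ^ ℓ - 1) := by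
    have h2 : (2:ℕ) ^ (ℓ+1) = 2 ^ ℓ + 2 ^ ℓ := by ring
    omega
  unfold piList
  rw [h1, List.range_add, List.range_add, List.map_append, List.map_append]
  congr 1
  · congr 1
    simp only [ List.map_cons, List.map_nil, List.map_map, Function.comp]
    have : Fact (Nat.Prime 2) := ⟨Nat.prime_two⟩
    have h3 : 2 ^ ℓ - 1 + 0 + 1 = 2 ^ ℓ := by omega
    show [beta (padicValNat 2 (2 ^ ℓ - 1 + 0 + 1))] = [beta ℓ]
    rw [h3, padicValNat.prime_pow]
  · rw [List.map_map]
    apply List.map_congr_left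
    intro i hi
    simp only [List.mem_range] at hi
    simp only [Function.comp]
    have h2 : 2 ^ ℓ - 1 + 1 + i + 1 = 2 ^ ℓ + (i + 1) := by omega
    rw [h2, val_add_pow ℓ (i+1) (by omega) (by omega)]

lemma sqrt2_sq : Real.sqrt 2 ^ 2 = 2 := Real.sq_sqrt (by norm_num)

lemma alpha_pos : (0:ℝ) < 1 + Real.sqrt 2 := by positivity

lemma piList_sum (ℓ : ℕ) : (piList ℓ).sum = (1 + Real.sqrt 2) ^ ℓ - 1 := by
  induction ℓ with
  | zero => simp [piList]
  | succ n ih =>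
    rw [piList_succ, List.sum_append, List.sum_append, ih]
    simp only [List.sum_cons, List.sum_nil, add_zero, beta]
    have hb : (1 + Real.sqrt 2) ^ ((n : ℝ) - 1) * (1 + Real.sqrt 2) = (1 + Real.sqrt 2) ^ (n:ℕ) := by
      rw [← Real.rpow_natCast (1 + Real.sqrt 2) n, ← Real.rpow_add_one alpha_pos.ne']
      ring_nf
    have hs := sqrt2_sq
    linear_combination (Real.sqrt 2 - 1) * hb - ((1 + Real.sqrt 2) ^ ((n:ℝ) - 1)) * hs

/-- σ^(1) = ∅ and σ^(k) = (1/2)(1+√2)^{-2(k-1)} [π^(k-2), β_k, 2(1+√2)^{2(k-1)} σ^(k-1)]. -/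
noncomputable def sigma : ℕ → List ℝ
  | 0 => []
  | 1 => []
  | (k + 2) =>
      ((piList k ++ [beta (k + 2)]
          ++ (sigma (k + 1)).map fun x => 2 * (1 + Real.sqrt 2) ^ (2 * (k + 1)) * x).map
        fun x => (1 / 2) / (1 + Real.sqrt 2) ^ (2 * (k + 1)) * x)

/-- for every k ≥ 1, the sum of the entries of σ^(k) equals
(1/2)(1 - (1+√2)^{1-k}). -/
theorem stmt12 (k : ℕ) (hk : 1 ≤ k) :
    (sigma k).sum = (1 / 2) * (1 - (1 + Real.sqrt 2) ^ ((1 : ℝ) - (k : ℝ))) := by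
  obtain ⟨n, rfl⟩ : ∃ n, k = n + 1 := ⟨k - 1, by omega⟩
  clear hk
  induction n with
  | zero => simp [sigma]
  | succ n ih =>
    have ha := alpha_pos
    have hs := sqrt2_sq
    have hrpow : ∀ m : ℕ, (1 + Real.sqrt 2) ^ ((1:ℝ) - ((m+1 : ℕ) : ℝ)) =
        ((1 + Real.sqrt 2) ^ m)⁻¹ := by
      intro m
      have : (1:ℝ) - ((m+1 : ℕ) : ℝ) = -(m : ℝ) := by push_cast; ring
      rw [this, Real.rpow_neg ha.le, Real.rpow_natCast]
    rw [hrpow] at ih ⊢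
    show ((piList n ++ [beta (n + 2)]
          ++ (sigma (n + 1)).map fun x => 2 * (1 + Real.sqrt 2) ^ (2 * (n + 1)) * x).map
        fun x => (1 / 2) / (1 + Real.sqrt 2) ^ (2 * (n + 1)) * x).sum = _
    rw [show (fun x : ℝ => (1 / 2) / (1 + Real.sqrt 2) ^ (2 * (n + 1)) * x)
        = (fun x : ℝ => (1 / 2) / (1 + Real.sqrt 2) ^ (2 * (n + 1)) * id x) from rfl,
      List.sum_map_mul_left, List.map_id]
    rw [List.sum_append, List.sum_append, List.sum_cons, List.sum_nil,
      List.sum_map_mul_left]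
    simp only [List.map_id']
    rw [ih, piList_sum]
    have hbeta : beta (n + 2) = 1 + (1 + Real.sqrt 2) ^ (n+1 : ℕ) := by
      rw [beta, show ((n+2 : ℕ) : ℝ) - 1 = ((n+1 : ℕ) : ℝ) by push_cast; ring,
        Real.rpow_natCast]
    rw [hbeta]
    have hne : (1 + Real.sqrt 2) ≠ 0 := ha.ne'
    field_simp
    ring_nf
    linear_combination (-(1+Real.sqrt 2)^(n*3)*(1+Real.sqrt 2)) * hs
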